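/- Fix d, J ∈ ℕ. Let ρ_ref : ℝ^d → ℝ be continuously differentiable and strictly positive, let a_j ∈ ℝ^d, let A_j be symmetric positive definite d×d real matrices and let w_j ≥ 0 be weights with Σ_{j=1}^J w_j = 1. For t ∈ [0,1] define A_{j,t} := t A_j + (1−t) Id_d, ρ_{j,t}(x) := |det A_{j,t}|⁻¹ ρ_ref(A_{j,t}⁻¹(x − t a_j)), v_{j,t}(x) := a_j + (A_j − Id_d) A_{j,t}⁻¹(x − t a_j), ρ_t := Σ_{j=1}^J w_j ρ_{j,t} and v_t := ρ_t⁻¹ Σ_{j=1}^J w_j ρ_{j,t} v_{j,t}. Then ρ_t is strictly positive, and the family (ρ_t) solves the continuity equation with velocity field v_t: for every t ∈ [0,1] and x ∈ ℝ^d, (∂/∂t) ρ_t(x) + div_x(ρ_t v_t)(x) = 0, where div_x F(x) := Σ_{i=1}^d ∂F_i/∂x_i (x) and ρ_0 = ρ_ref, ρ_1 equals the target mixture density. -/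

import Mathlib

/-!
Each component `ρ_{j,t}` is the image of `ρ_ref` under the affine flow `y ↦ A_{j,t} y + t a_j`,
and `v_{j,t}` is the Eulerian velocity of that flow, so each component solves the continuity
equation by a direct computation: by Jacobi's formula the factor `|det A_{j,t}|⁻¹` decays at
rate `tr (A_{j,t}⁻¹ (A_j - 1))`, which is the divergence of the affine field `v_{j,t}`, and the
chain-rule term of `ρ_ref` is the transport term `∇ρ_{j,t} · v_{j,t}` with the opposite sign.
The equation is linear in `(ρ, ρ v)`, and `ρ_t v_t = ∑ w_j ρ_{j,t} v_{j,t}` because `ρ_t > 0`,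
so the mixture solves it as well. Positivity holds because `A_{j,t}` is a convex combination of
positive definite matrices.
-/

open Matrix

variable {n : Type*}

theorem Matrix.PosDef.smul_add_one_sub_smul {A C : Matrix n n ℝ} (hA : A.PosDef) (hC : C.PosDef)
    {t : ℝ} (h0 : 0 ≤ t) (h1 : t ≤ 1) : (t • A + (1 - t) • C).PosDef := by
  rcases h0.eq_or_lt with rfl | ht
  · simpa using hC
  · exact (hA.smul ht).add_posSemidef (hC.posSemidef.smul (sub_nonneg.2 h1))

variable [Fintype n]

section MatrixCalculus

-- The norm is only a device for the proofs: `HasDerivAt` of a matrix-valued map depends only on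
-- the topology of `Matrix`, which this norm induces. The instances differ syntactically, so
-- derived facts are closed by `exact` (up to defeq) rather than by `simpa`.
attribute [local instance] Matrix.linftyOpNormedAddCommGroup Matrix.linftyOpNormedSpace
  Matrix.linftyOpNormedRing Matrix.linftyOpNormedAlgebra

variable {t : ℝ}

theorem HasDerivAt.mulVec {m : Type*} [Fintype m] {M : ℝ → Matrix m n ℝ} {M' : Matrix m n ℝ}
    {u : ℝ → n → ℝ} {u' : n → ℝ} (hM : HasDerivAt M M' t) (hu : HasDerivAt u u' t) :
    HasDerivAt (fun s => M s *ᵥ u s) (M' *ᵥ u t + M t *ᵥ u') t := by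
  let L : Matrix m n ℝ →L[ℝ] (n → ℝ) →L[ℝ] m → ℝ := LinearMap.toContinuousLinearMap
    (LinearMap.toContinuousLinearMap.toLinearMap ∘ₗ mulVecBilin ℝ ℝ)
  exact (L.hasFDerivAt.comp_hasDerivAt t hM).clm_apply hu

theorem hasDerivAt_smul_add_one_sub_smul (C M : Matrix n n ℝ) :
    HasDerivAt (fun s : ℝ => s • M + (1 - s) • C) (M - C) t := by
  have h := ((hasDerivAt_id t).smul_const M).add (((hasDerivAt_id t).const_sub 1).smul_const C)
  simp only [id, one_smul, neg_one_smul, ← sub_eq_add_neg] at h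
  exact h

variable [DecidableEq n]

theorem Matrix.differentiable_det : Differentiable ℝ (det : Matrix n n ℝ → ℝ) := by
  have hentry (i j : n) : Differentiable ℝ fun M : Matrix n n ℝ => M i j :=
    (LinearMap.toContinuousLinearMap (entryLinearMap ℝ ℝ i j)).differentiable
  rw [show (det : Matrix n n ℝ → ℝ) = fun M => ∑ σ : Equiv.Perm n, (σ.sign : ℝ) * ∏ i, M (σ i) i
    from funext det_apply']
  fun_prop

theorem Matrix.hasDerivAt_det_one_add_smul (M : Matrix n n ℝ) :
    HasDerivAt (fun s : ℝ => det (1 + s • M)) (trace M) 0 := by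
  open Polynomial in
  have hpoly : (fun s : ℝ => det (1 + s • M)) =
      fun s => (det (1 + (X : ℝ[X]) • M.map C)).eval s := by
    funext s; simp [eval_det, ← smul_eq_mul_diagonal]
  rw [hpoly, ← derivative_det_one_add_X_smul]
  exact Polynomial.hasDerivAt _ _

variable {B : ℝ → Matrix n n ℝ} {B' : Matrix n n ℝ}

theorem HasDerivAt.det (hB : HasDerivAt B B' t) (hU : IsUnit (B t).det) :
    HasDerivAt (fun s => (B s).det) ((B t).det * trace ((B t)⁻¹ * B')) t := by
  set C := B t
  have hdet : HasFDerivAt Matrix.det (fderiv ℝ Matrix.det C) C :=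
    differentiable_det.differentiableAt.hasFDerivAt
  have hline : HasDerivAt (fun s : ℝ => C + s • B') B' 0 := by
    have h := ((hasDerivAt_id (0 : ℝ)).smul_const B').const_add C
    simp only [id, one_smul] at h
    exact h
  have hdir : fderiv ℝ Matrix.det C B' = C.det * trace (C⁻¹ * B') := by
    have hfactor : (fun s : ℝ => Matrix.det (C + s • B')) =
        fun s => C.det * Matrix.det (1 + s • (C⁻¹ * B')) := by
      funext s
      rw [← det_mul, mul_add, mul_one, Matrix.mul_smul, mul_nonsing_inv_cancel_left _ _ hU]
    refine (hdet.comp_hasDerivAt_of_eq 0 hline (by simp)).unique ?_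
    rw [Function.comp_def, hfactor]
    exact (hasDerivAt_det_one_add_smul _).const_mul _
  exact hdir ▸ hdet.comp_hasDerivAt t hB

theorem HasDerivAt.nonsing_inv (hB : HasDerivAt B B' t) (hU : IsUnit (B t)) :
    HasDerivAt (fun s => (B s)⁻¹) (-((B t)⁻¹ * B' * (B t)⁻¹)) t := by
  have : CompleteSpace (Matrix n n ℝ) := FiniteDimensional.complete ℝ _
  have h := hasFDerivAt_ringInverse (𝕜 := ℝ) hU.unit
  rw [hU.unit_spec] at h
  have h2 := h.comp_hasDerivAt t hB
  simp only [Function.comp_def, ← nonsing_inv_eq_ringInverse, coe_units_inv, hU.unit_spec] at h2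
  exact h2

end MatrixCalculus

theorem hasFDerivAt_mulVec_sub (M : Matrix n n ℝ) (c x : n → ℝ) :
    HasFDerivAt (fun y => M *ᵥ (y - c)) (LinearMap.toContinuousLinearMap M.mulVecLin) x :=
  (LinearMap.toContinuousLinearMap M.mulVecLin).hasFDerivAt.comp x ((hasFDerivAt_id x).sub_const c)

variable [DecidableEq n]

section Divergence

noncomputable def divergence (F : (n → ℝ) → n → ℝ) (x : n → ℝ) : ℝ :=
  ∑ i, fderiv ℝ (fun y => F y i) x (Pi.single i 1)

variable {F : (n → ℝ) → n → ℝ} {F' : (n → ℝ) →L[ℝ] n → ℝ} {x : n → ℝ}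

theorem HasFDerivAt.divergence_eq (h : HasFDerivAt F F' x) :
    divergence F x = ∑ i, F' (Pi.single i 1) i := by
  refine Finset.sum_congr rfl fun i _ => ?_
  rw [(hasFDerivAt_pi'.1 h i).fderiv]
  rfl

theorem HasFDerivAt.divergence_eq_trace {M : Matrix n n ℝ}
    (h : HasFDerivAt F (LinearMap.toContinuousLinearMap M.mulVecLin) x) :
    divergence F x = trace M := by
  simp [h.divergence_eq, mulVec_single, trace]

theorem HasFDerivAt.divergence_smul {φ : (n → ℝ) → ℝ} {φ' : (n → ℝ) →L[ℝ] ℝ}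
    (hφ : HasFDerivAt φ φ' x) (hF : HasFDerivAt F F' x) :
    divergence (fun y => φ y • F y) x = φ x * divergence F x + φ' (F x) := by
  have hφF : φ' (F x) = ∑ i, φ' (Pi.single i 1) * F x i := by
    conv_lhs => rw [← Finset.univ_sum_single (F x)]
    refine (map_sum _ _ _).trans (Finset.sum_congr rfl fun i _ => ?_)
    rw [mul_comm, ← smul_eq_mul, ← map_smul, ← Pi.single_smul, smul_eq_mul, mul_one]
  rw [(hφ.fun_smul hF).divergence_eq, hF.divergence_eq, hφF, Finset.mul_sum,
    ← Finset.sum_add_distrib]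
  simp

theorem divergence_sum_smul {ι : Type*} (s : Finset ι) (w : ι → ℝ) {F : ι → (n → ℝ) → n → ℝ}
    (hF : ∀ j ∈ s, DifferentiableAt ℝ (F j) x) :
    divergence (fun y => ∑ j ∈ s, w j • F j y) x = ∑ j ∈ s, w j * divergence (F j) x := by
  rw [Finset.sum_congr rfl fun j hj => congrArg _ (hF j hj).hasFDerivAt.divergence_eq,
    (HasFDerivAt.fun_sum fun j hj => (hF j hj).hasFDerivAt.fun_const_smul (w j)).divergence_eq]
  simp only [_root_.sum_apply, _root_.smul_apply, Finset.sum_apply, Pi.smul_apply, smul_eq_mul,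
    Finset.mul_sum]
  exact Finset.sum_comm

theorem deriv_sum_add_divergence_sum {ι : Type*} [Fintype ι] (w : ι → ℝ)
    {ρ : ι → ℝ → (n → ℝ) → ℝ} {F : ι → (n → ℝ) → n → ℝ} {t : ℝ}
    (hρ : ∀ j, DifferentiableAt ℝ (fun s => ρ j s x) t) (hF : ∀ j, DifferentiableAt ℝ (F j) x) :
    deriv (fun s => ∑ j, w j * ρ j s x) t + divergence (fun y => ∑ j, w j • F j y) x
      = ∑ j, w j * (deriv (fun s => ρ j s x) t + divergence (F j) x) := by
  rw [divergence_sum_smul _ _ fun j _ => hF j, deriv_fun_sum fun j _ => (hρ j).const_mul (w j),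
    ← Finset.sum_add_distrib]
  exact Finset.sum_congr rfl fun j _ => by rw [deriv_const_mul _ (hρ j), mul_add]

end Divergence

section AffinePushforward

variable (f : (n → ℝ) → ℝ)

/-- The density of the image of the density `f` under `y ↦ B *ᵥ y + c`. -/
noncomputable def affinePushforward (B : Matrix n n ℝ) (c x : n → ℝ) : ℝ :=
  |B.det|⁻¹ * f (B⁻¹ *ᵥ (x - c))

/-- The Eulerian velocity field of the flow `y ↦ B s *ᵥ y + c s` at a time where
`(B s, c s) = (B, c)` moves with velocity `(B', c')`. -/
noncomputable def affineFlowVelocity (B B' : Matrix n n ℝ) (c c' x : n → ℝ) : n → ℝ :=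
  c' + B' *ᵥ (B⁻¹ *ᵥ (x - c))

variable {f}

theorem affinePushforward_pos (hf : ∀ y, 0 < f y) {B : Matrix n n ℝ} (hB : IsUnit B.det)
    (c x : n → ℝ) : 0 < affinePushforward f B c x :=
  mul_pos (inv_pos.2 (abs_pos.2 hB.ne_zero)) (hf _)

theorem hasFDerivAt_affinePushforward (B : Matrix n n ℝ) (c x : n → ℝ)
    (hf : DifferentiableAt ℝ f (B⁻¹ *ᵥ (x - c))) :
    HasFDerivAt (affinePushforward f B c)
      (|B.det|⁻¹ • (fderiv ℝ f (B⁻¹ *ᵥ (x - c))).comp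
        (LinearMap.toContinuousLinearMap B⁻¹.mulVecLin)) x :=
  (hf.hasFDerivAt.comp x (hasFDerivAt_mulVec_sub B⁻¹ c x)).const_mul _

theorem hasFDerivAt_affineFlowVelocity (B B' : Matrix n n ℝ) (c c' x : n → ℝ) :
    HasFDerivAt (affineFlowVelocity B B' c c')
      (LinearMap.toContinuousLinearMap (B' * B⁻¹).mulVecLin) x := by
  have h := (hasFDerivAt_mulVec_sub (B' * B⁻¹) c x).const_add c'
  simp only [← mulVec_mulVec] at h
  exact h

theorem hasDerivAt_affinePushforward {B : ℝ → Matrix n n ℝ} {B' : Matrix n n ℝ}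
    {c : ℝ → n → ℝ} {c' x : n → ℝ} {t : ℝ} (hB : HasDerivAt B B' t) (hc : HasDerivAt c c' t)
    (hU : IsUnit (B t).det) (hf : DifferentiableAt ℝ f ((B t)⁻¹ *ᵥ (x - c t))) :
    HasDerivAt (fun s => affinePushforward f (B s) (c s) x)
      (-(trace ((B t)⁻¹ * B') * affinePushforward f (B t) (c t) x
        + |(B t).det|⁻¹ * fderiv ℝ f ((B t)⁻¹ *ᵥ (x - c t))
            ((B t)⁻¹ *ᵥ affineFlowVelocity (B t) B' (c t) c' x))) t := by
  have hdet : HasDerivAt (fun s => |(B s).det|⁻¹) (-trace ((B t)⁻¹ * B') * |(B t).det|⁻¹) t := by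
    have habs := (hasDerivAt_abs hU.ne_zero).comp t (hB.det hU)
    refine (habs.inv (abs_ne_zero.2 hU.ne_zero)).congr_deriv ?_
    rw [Function.comp_apply, ← mul_assoc, sign_mul_self]
    field_simp
  have hpre : HasDerivAt (fun s => (B s)⁻¹ *ᵥ (x - c s))
      (-((B t)⁻¹ *ᵥ affineFlowVelocity (B t) B' (c t) c' x)) t := by
    refine ((hB.nonsing_inv ((isUnit_iff_isUnit_det _).2 hU)).mulVec
      (hc.const_sub x)).congr_deriv ?_
    simp only [affineFlowVelocity, mulVec_add, mulVec_mulVec, neg_mulVec, mulVec_neg, mulVec_sub,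
      Matrix.mul_assoc]
    abel
  refine (hdet.mul (hf.hasFDerivAt.comp_hasDerivAt t hpre)).congr_deriv ?_
  simp only [affinePushforward, map_neg, Function.comp_apply]
  ring

theorem affinePushforward_continuity {B : ℝ → Matrix n n ℝ} {B' : Matrix n n ℝ}
    {c : ℝ → n → ℝ} {c' x : n → ℝ} {t : ℝ} (hB : HasDerivAt B B' t) (hc : HasDerivAt c c' t)
    (hU : IsUnit (B t).det) (hf : DifferentiableAt ℝ f ((B t)⁻¹ *ᵥ (x - c t))) :
    deriv (fun s => affinePushforward f (B s) (c s) x) t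
      + divergence (fun y => affinePushforward f (B t) (c t) y
          • affineFlowVelocity (B t) B' (c t) c' y) x = 0 := by
  rw [(hasDerivAt_affinePushforward hB hc hU hf).deriv,
    (hasFDerivAt_affinePushforward _ _ x hf).divergence_smul
      (hasFDerivAt_affineFlowVelocity _ _ _ _ x),
    (hasFDerivAt_affineFlowVelocity _ _ _ _ x).divergence_eq_trace, trace_mul_comm]
  simp only [_root_.smul_apply, ContinuousLinearMap.comp_apply,
    LinearMap.coe_toContinuousLinearMap', mulVecLin_apply, smul_eq_mul]
  ring

end AffinePushforward

theorem sum_mul_pos_of_sum_eq_one {ι : Type*} [Fintype ι] {w p : ι → ℝ} (hw : ∀ j, 0 ≤ w j)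
    (hw1 : ∑ j, w j = 1) (hp : ∀ j, 0 < p j) : 0 < ∑ j, w j * p j := by
  obtain ⟨j, -, hj⟩ : ∃ j ∈ Finset.univ, (0 : ι → ℝ) j < w j :=
    Finset.exists_lt_of_sum_lt (by simp [hw1])
  exact Finset.sum_pos' (fun j _ => mul_nonneg (hw j) (hp j).le)
    ⟨j, Finset.mem_univ j, mul_pos hj (hp j)⟩

theorem mixture_continuity_equation_general
    (d J : ℕ) (ρref : (Fin d → ℝ) → ℝ)
    (hsm : ContDiff ℝ 1 ρref) (hpos : ∀ x, 0 < ρref x)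
    (a : Fin J → Fin d → ℝ) (A : Fin J → Matrix (Fin d) (Fin d) ℝ)
    (hA : ∀ j, (A j).PosDef)
    (w : Fin J → ℝ) (hw : ∀ j, 0 ≤ w j) (hw1 : ∑ j : Fin J, w j = 1) :
    let Ajt : Fin J → ℝ → Matrix (Fin d) (Fin d) ℝ :=
      fun j t => t • A j + (1 - t) • (1 : Matrix (Fin d) (Fin d) ℝ)
    let ρjt : Fin J → ℝ → (Fin d → ℝ) → ℝ :=
      fun j t x => |(Ajt j t).det|⁻¹ * ρref ((Ajt j t)⁻¹.mulVec (x - t • a j))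
    let vjt : Fin J → ℝ → (Fin d → ℝ) → (Fin d → ℝ) :=
      fun j t x => a j + (A j - 1).mulVec ((Ajt j t)⁻¹.mulVec (x - t • a j))
    let ρ : ℝ → (Fin d → ℝ) → ℝ := fun t x => ∑ j : Fin J, w j * ρjt j t x
    let v : ℝ → (Fin d → ℝ) → (Fin d → ℝ) :=
      fun t x => (ρ t x)⁻¹ • ∑ j : Fin J, (w j * ρjt j t x) • vjt j t x
    (∀ t ∈ Set.Icc (0 : ℝ) 1, ∀ x : Fin d → ℝ, 0 < ρ t x)
    ∧ (∀ t ∈ Set.Icc (0 : ℝ) 1, ∀ x : Fin d → ℝ,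
        deriv (fun s : ℝ => ρ s x) t
          + ∑ i : Fin d, fderiv ℝ (fun y : Fin d → ℝ => ρ t y * v t y i) x (Pi.single i 1)
          = 0)
    ∧ (∀ x : Fin d → ℝ, ρ 0 x = ρref x)
    ∧ (∀ x : Fin d → ℝ,
        ρ 1 x = ∑ j : Fin J, w j * (|(A j).det|⁻¹ * ρref ((A j)⁻¹.mulVec (x - a j)))) := by
  intro Ajt ρjt vjt ρ v
  have hU (j : Fin J) (t : ℝ) (ht : t ∈ Set.Icc (0 : ℝ) 1) : IsUnit (Ajt j t).det :=
    ((hA j).smul_add_one_sub_smul PosDef.one ht.1 ht.2).det_pos.ne'.isUnit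
  have hρ (t : ℝ) (ht : t ∈ Set.Icc (0 : ℝ) 1) (x : Fin d → ℝ) : 0 < ρ t x :=
    sum_mul_pos_of_sum_eq_one hw hw1 fun j => affinePushforward_pos hpos (hU j t ht) _ x
  have hf (y : Fin d → ℝ) : DifferentiableAt ℝ ρref y := hsm.differentiable one_ne_zero y
  refine ⟨hρ, fun t ht x => ?_, fun x => ?_, fun x => ?_⟩
  · have hB (j : Fin J) : HasDerivAt (Ajt j) (A j - 1) t :=
      hasDerivAt_smul_add_one_sub_smul 1 (A j)
    have hc (j : Fin J) : HasDerivAt (fun s : ℝ => s • a j) (a j) t := by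
      simpa using (hasDerivAt_id t).smul_const (a j)
    have hflux : (fun y => ρ t y • v t y) = fun y => ∑ j, w j • (ρjt j t y • vjt j t y) := by
      funext y
      rw [smul_smul, mul_inv_cancel₀ (hρ t ht y).ne', one_smul]
      exact Finset.sum_congr rfl fun j _ => mul_smul _ _ _
    have hρj (j : Fin J) : DifferentiableAt ℝ (fun s => ρjt j s x) t :=
      (hasDerivAt_affinePushforward (hB j) (hc j) (hU j t ht) (hf _)).differentiableAt
    have hfluxj (j : Fin J) : DifferentiableAt ℝ (fun y => ρjt j t y • vjt j t y) x :=
      ((hasFDerivAt_affinePushforward _ _ x (hf _)).fun_smul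
        (hasFDerivAt_affineFlowVelocity _ _ _ _ x)).differentiableAt
    change deriv (fun s => ∑ j, w j * ρjt j s x) t + divergence (fun y => ρ t y • v t y) x = 0
    rw [hflux, deriv_sum_add_divergence_sum w hρj hfluxj]
    exact Finset.sum_eq_zero fun j _ => mul_eq_zero_of_right _
      (affinePushforward_continuity (hB j) (hc j) (hU j t ht) (hf _))
  · simp [ρ, ρjt, Ajt, ← Finset.sum_mul, hw1]
  · simp [ρ, ρjt, Ajt]

/-- Main continuity-equation statement for the mixture transport: with
`A_{j,t} = t A_j + (1-t) Id`, `ρ_{j,t}(x) = |det A_{j,t}|⁻¹ ρ_ref (A_{j,t}⁻¹(x - t a_j))`,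
`v_{j,t}(x) = a_j + (A_j - Id) A_{j,t}⁻¹ (x - t a_j)`, `ρ_t = ∑ j, w_j ρ_{j,t}` and
`v_t = ρ_t⁻¹ ∑ j, w_j ρ_{j,t} v_{j,t}`, the densities `ρ_t` are strictly positive, solve
`∂ₜ ρ_t + div_x (ρ_t v_t) = 0` on `[0,1] × ℝ^d`, and interpolate between `ρ_ref` and the
target mixture density. -/
theorem mixture_continuity_equation
    (d J : ℕ) (ρref : (Fin d → ℝ) → ℝ)
    (hsm : ContDiff ℝ 1 ρref) (hpos : ∀ x, 0 < ρref x) (hint : ∫ x, ρref x = 1)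
    (a : Fin J → Fin d → ℝ) (A : Fin J → Matrix (Fin d) (Fin d) ℝ)
    (hA : ∀ j, (A j).PosDef)
    (w : Fin J → ℝ) (hw : ∀ j, 0 ≤ w j) (hw1 : ∑ j : Fin J, w j = 1) :
    let Ajt : Fin J → ℝ → Matrix (Fin d) (Fin d) ℝ :=
      fun j t => t • A j + (1 - t) • (1 : Matrix (Fin d) (Fin d) ℝ)
    let ρjt : Fin J → ℝ → (Fin d → ℝ) → ℝ :=
      fun j t x => |(Ajt j t).det|⁻¹ * ρref ((Ajt j t)⁻¹.mulVec (x - t • a j))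
    let vjt : Fin J → ℝ → (Fin d → ℝ) → (Fin d → ℝ) :=
      fun j t x => a j + (A j - 1).mulVec ((Ajt j t)⁻¹.mulVec (x - t • a j))
    let ρ : ℝ → (Fin d → ℝ) → ℝ := fun t x => ∑ j : Fin J, w j * ρjt j t x
    let v : ℝ → (Fin d → ℝ) → (Fin d → ℝ) :=
      fun t x => (ρ t x)⁻¹ • ∑ j : Fin J, (w j * ρjt j t x) • vjt j t x
    (∀ t ∈ Set.Icc (0 : ℝ) 1, ∀ x : Fin d → ℝ, 0 < ρ t x)
    ∧ (∀ t ∈ Set.Icc (0 : ℝ) 1, ∀ x : Fin d → ℝ,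
        deriv (fun s : ℝ => ρ s x) t
          + ∑ i : Fin d, fderiv ℝ (fun y : Fin d → ℝ => ρ t y * v t y i) x (Pi.single i 1)
          = 0)
    ∧ (∀ x : Fin d → ℝ, ρ 0 x = ρref x)
    ∧ (∀ x : Fin d → ℝ,
        ρ 1 x = ∑ j : Fin J, w j * (|(A j).det|⁻¹ * ρref ((A j)⁻¹.mulVec (x - a j)))) :=
  mixture_continuity_equation_general d J ρref hsm hpos a A hA w hw hw1
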